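/- Let A be a nontrivial closed class of decision tables from M_2^∞, ψ a bounded complexity measure, n ∈ ℕ, T ∈ A_ψ(n), and G(T) > 0. Then there exists a decision table T* ∈ [T] such that ψ^a(T*) ≤ n and ψ^d(T*) ≥ G(T) − 1. -/

import Mathlib

open Classical

noncomputable section

/-- A decision table with many-valued decisions over `E_k = {0,…,k-1}`.
Columns are labeled with attributes `f_i` identified with their indices `i : ℕ`;
a row is a function `ℕ → ℕ` supported on the attribute set, with values `< k`;
each row is labeled with a nonempty finite set of decisions. -/
structure Table (k : ℕ) where
  attrs : Finset ℕ
  rows : Finset (ℕ → ℕ)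
  dec : (ℕ → ℕ) → Finset ℕ
  rows_mem : ∀ r ∈ rows, (∀ i ∈ attrs, r i < k) ∧ (∀ i ∉ attrs, r i = 0)
  dec_nonempty : ∀ r ∈ rows, (dec r).Nonempty

namespace Table

variable {k : ℕ}

/-- a row satisfies a word (a list of (attribute, value) pairs) -/
def rowSat (r : ℕ → ℕ) (α : List (ℕ × ℕ)) : Prop := ∀ q ∈ α, r q.1 = q.2

/-- the word belongs to `Ω_k(T)` -/
def wordOk (T : Table k) (α : List (ℕ × ℕ)) : Prop := ∀ q ∈ α, q.1 ∈ T.attrs ∧ q.2 < k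

/-- the subtable `Tα` -/
def applyWord (T : Table k) (α : List (ℕ × ℕ)) : Table k where
  attrs := T.attrs
  rows := T.rows.filter (fun r => rowSat r α)
  dec := T.dec
  rows_mem := fun r hr => T.rows_mem r (Finset.mem_filter.mp hr).1
  dec_nonempty := fun r hr => T.dec_nonempty r (Finset.mem_filter.mp hr).1

/-- `T ∈ M_k^{∞c}` : the table has a common decision -/
def hasCommon (T : Table k) : Prop := ∃ d : ℕ, ∀ r ∈ T.rows, d ∈ T.dec r

/-- `N(T)` : number of rows -/
def NT (T : Table k) : ℕ := T.rows.card

/-- `W(T)` : number of columns (`0` for the empty table `Λ`) -/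
def WT (T : Table k) : ℕ := if T.rows = ∅ then 0 else T.attrs.card

/-- the closure `[T]` of `T` under removal of columns and changing of decisions:
`Q = J(ν, I(D,T))` for some `D ⊆ At(T)` and some `ν` (the decision labeling of `Q`
on its rows is arbitrary, i.e. is the arbitrary `ν` with nonempty finite values). -/
def closureT (T : Table k) : Set (Table k) :=
  {Q | ∃ D : Finset ℕ, D ⊆ T.attrs ∧ Q.attrs = T.attrs \ D ∧
      Q.rows = T.rows.image (fun r i => if i ∈ T.attrs \ D then r i else 0)}

end Table

/-- a closed class: `[A] = A` -/
def IsClosedClass {k : ℕ} (A : Set (Table k)) : Prop := ∀ T ∈ A, Table.closureT T ⊆ A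

/-- a nontrivial class: contains nonempty tables -/
def NontrivialClass {k : ℕ} (A : Set (Table k)) : Prop := ∃ T ∈ A, T.rows.Nonempty

/-- the part of a `k`-decision tree below one edge leaving the root -/
inductive DTree (k : ℕ) : Type
  | leaf (d : ℕ) : DTree k
  | node (a : ℕ) (n : ℕ) (lab : Fin (n + 1) → ℕ) (ch : Fin (n + 1) → DTree k) : DTree k

namespace DTree

variable {k : ℕ}

/-- the set of pairs (π(τ), terminal decision) over complete paths τ -/
def paths : DTree k → Set (List (ℕ × ℕ) × ℕ)
  | leaf d => {([], d)}
  | node a _ lab ch =>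
      ⋃ i, (fun p : List (ℕ × ℕ) × ℕ => ((a, lab i) :: p.1, p.2)) '' paths (ch i)

/-- edge labels belong to `E_k` -/
def wf : DTree k → Prop
  | leaf _ => True
  | node _ _ lab ch => (∀ i, lab i < k) ∧ ∀ i, wf (ch i)

/-- edges leaving any node are labeled with pairwise different numbers -/
def det : DTree k → Prop
  | leaf _ => True
  | node _ _ lab ch => Function.Injective lab ∧ ∀ i, det (ch i)

/-- the set of attributes attached to nodes -/
def attrs : DTree k → Finset ℕ
  | leaf _ => ∅
  | node a _ _ ch => insert a (Finset.univ.biUnion fun i => attrs (ch i))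

end DTree

/-- a `k`-decision tree: an unlabeled root with `n+1` unlabeled edges leaving it -/
structure KTree (k : ℕ) where
  n : ℕ
  sub : Fin (n + 1) → DTree k

namespace KTree

variable {k : ℕ}

def paths (Γ : KTree k) : Set (List (ℕ × ℕ) × ℕ) := ⋃ i, (Γ.sub i).paths

def wf (Γ : KTree k) : Prop := ∀ i, (Γ.sub i).wf

def attrs (Γ : KTree k) : Finset ℕ := Finset.univ.biUnion fun i => (Γ.sub i).attrs

end KTree

/-- partially bounded complexity measure on words over `P` -/
structure PBCM where
  toFun : List ℕ → ℕ
  pos : ∀ α, toFun α = 0 ↔ α = []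
  perm : ∀ α β, List.Perm α β → toFun α = toFun β
  mono : ∀ α β, toFun α ≤ toFun (α ++ β)
  subadd : ∀ α β, toFun (α ++ β) ≤ toFun α + toFun β

/-- bounded complexity measure -/
structure BCM extends PBCM where
  bdd : ∀ α, α.length ≤ toFun α

/-- extension of ψ to words over pairs `(f_i, δ)` -/
def PBCM.onWord (ψ : PBCM) (α : List (ℕ × ℕ)) : ℕ := ψ.toFun (α.map Prod.fst)

/-- extension of ψ to finite sets of attributes -/
def PBCM.onSet (ψ : PBCM) (s : Finset ℕ) : ℕ := ψ.toFun (s.sort (· ≤ ·))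

/-- the depth `h` -/
def depthCM : BCM where
  toFun := List.length
  pos := fun α => List.length_eq_zero_iff
  perm := fun _ _ h => h.length_eq
  mono := fun α β => by simp
  subadd := fun α β => by simp
  bdd := fun _ => le_rfl

/-- `ψ(Γ)` : complexity of a decision tree -/
def treeComp {k : ℕ} (ψ : PBCM) (Γ : KTree k) : ℕ :=
  sSup {c | ∃ p ∈ Γ.paths, ψ.onWord p.1 = c}

/-- `Γ` is a nondeterministic decision tree for the (nonempty) table `T` -/
def isNDT {k : ℕ} (T : Table k) (Γ : KTree k) : Prop :=
  T.rows.Nonempty ∧ Γ.wf ∧ Γ.attrs ⊆ T.attrs ∧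
  (∀ r ∈ T.rows, ∃ p ∈ Γ.paths, Table.rowSat r p.1) ∧
  (∀ p ∈ Γ.paths, (T.applyWord p.1).rows = ∅ ∨ ∀ r ∈ (T.applyWord p.1).rows, p.2 ∈ T.dec r)

/-- `Γ` is a deterministic decision tree for `T` -/
def isDDT {k : ℕ} (T : Table k) (Γ : KTree k) : Prop :=
  isNDT T Γ ∧ Γ.n = 0 ∧ ∀ i, (Γ.sub i).det

/-- `ψ^a(T)` -/
def psiA {k : ℕ} (ψ : PBCM) (T : Table k) : ℕ :=
  sInf {c | ∃ Γ : KTree k, isNDT T Γ ∧ treeComp ψ Γ = c}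

/-- `ψ^d(T)` -/
def psiD {k : ℕ} (ψ : PBCM) (T : Table k) : ℕ :=
  sInf {c | ∃ Γ : KTree k, isDDT T Γ ∧ treeComp ψ Γ = c}

/-- `m_ψ(T)` -/
def mpsi {k : ℕ} (ψ : PBCM) (T : Table k) : ℕ :=
  if T.rows = ∅ then 0 else T.attrs.sup fun i => ψ.toFun [i]

/-- `W_ψ(T)` -/
def Wpsi {k : ℕ} (ψ : PBCM) (T : Table k) : ℕ :=
  if T.rows = ∅ then 0 else ψ.onSet T.attrs

/-- a tuple `δ̄ ∈ E_k^{|At(T)|}` -/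
def validTuple {k : ℕ} (T : Table k) (δ : ℕ → ℕ) : Prop :=
  (∀ i ∈ T.attrs, δ i < k) ∧ ∀ i ∉ T.attrs, δ i = 0

/-- `M_ψ(T, δ̄)` -/
def MpsiAt {k : ℕ} (ψ : PBCM) (T : Table k) (δ : ℕ → ℕ) : ℕ :=
  sInf {p | ∃ s : Finset ℕ, s ⊆ T.attrs ∧
    (T.applyWord ((s.sort (· ≤ ·)).map fun i => (i, δ i))).hasCommon ∧ ψ.onSet s = p}

/-- `M_ψ(T)` -/
def Mpsi {k : ℕ} (ψ : PBCM) (T : Table k) : ℕ :=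
  if T.hasCommon then 0 else sSup {p | ∃ δ, validTuple T δ ∧ MpsiAt ψ T δ = p}

/-- `U` is a `(ψ,n)`-cover of `T` -/
def isCover {k : ℕ} (ψ : PBCM) (n : ℕ) (T : Table k) (U : Finset (List (ℕ × ℕ))) : Prop :=
  (∀ α ∈ U, T.wordOk α ∧ ψ.onWord α ≤ n) ∧ ∀ r ∈ T.rows, ∃ α ∈ U, Table.rowSat r α

/-- `U` is an irreducible `(ψ,n)`-cover of `T` -/
def isIrredCover {k : ℕ} (ψ : PBCM) (n : ℕ) (T : Table k) (U : Finset (List (ℕ × ℕ))) : Prop :=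
  isCover ψ n T U ∧ ∀ V ⊂ U, ¬ isCover ψ n T V

/-- `l_ψ(T,n)` : maximum cardinality of an irreducible `(ψ,n)`-cover -/
def lpsi {k : ℕ} (ψ : PBCM) (T : Table k) (n : ℕ) : ℕ :=
  sSup {c | ∃ U, isIrredCover ψ n T U ∧ U.card = c}

/-- the set `{ψ^d(T) : T ∈ A, ψ^a(T) ≤ n}`; `H^∞_{ψ,A}(n)` is defined iff this set
is finite, and is then its maximum -/
def HSet {k : ℕ} (ψ : PBCM) (A : Set (Table k)) (n : ℕ) : Set ℕ :=
  {c | ∃ T ∈ A, psiA ψ T ≤ n ∧ psiD ψ T = c}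

/-- `H^∞_{ψ,A}(n)` (as the max = sSup of the finite set `HSet ψ A n`) -/
def Hfun {k : ℕ} (ψ : PBCM) (A : Set (Table k)) (n : ℕ) : ℕ := sSup (HSet ψ A n)

/-- the set `{l_ψ(T,n) : T ∈ A}` -/
def LSet {k : ℕ} (ψ : PBCM) (A : Set (Table k)) (n : ℕ) : Set ℕ :=
  {c | ∃ T ∈ A, lpsi ψ T n = c}

/-- `L_{ψ,A}(n)` -/
def Lfun {k : ℕ} (ψ : PBCM) (A : Set (Table k)) (n : ℕ) : ℕ := sSup (LSet ψ A n)

/-- `H_D` for an infinite `D ⊆ ℕ` : `H_D(n)` is the largest element of `D` that is `≤ n`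
(and `0` if there is none) -/
def HDfun (D : Set ℕ) (n : ℕ) : ℕ := sSup {d | d ∈ D ∧ d ≤ n}

/-- a complete table from `M_2^∞` -/
def isComplete (Q : Table 2) : Prop := Q.NT = 2 ^ Q.attrs.card

/-- `Z(T)` : maximum number of columns in a complete table from `[T]` (`0` if none) -/
def Zt (T : Table 2) : ℕ := sSup {c | ∃ Q ∈ Table.closureT T, isComplete Q ∧ Q.WT = c}

/-- the set `{Z(T) : T ∈ A_ψ(n)}` -/
def ZSet (ψ : PBCM) (A : Set (Table 2)) (n : ℕ) : Set ℕ :=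
  {c | ∃ T ∈ A, mpsi ψ T ≤ n ∧ Zt T = c}

/-- `Z_{ψ,A}(n)` -/
def Zfun (ψ : PBCM) (A : Set (Table 2)) (n : ℕ) : ℕ := sSup (ZSet ψ A n)

/-- annihilating word for `T` -/
def isAnnih (T : Table 2) (α : List (ℕ × ℕ)) : Prop :=
  T.wordOk α ∧ (∀ p ∈ α, ∀ q ∈ α, p.1 = q.1 → p.2 = q.2) ∧ (T.applyWord α).rows = ∅

/-- irreducible annihilating word for `T` -/
def isIrredAnnih (T : Table 2) (α : List (ℕ × ℕ)) : Prop :=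
  isAnnih T α ∧ ∀ β, β.Sublist α → β ≠ α → ¬ isAnnih T β

/-- `G(T)` : maximum length of an irreducible annihilating word (`0` if none) -/
def Gt (T : Table 2) : ℕ := sSup {c | ∃ α, isIrredAnnih T α ∧ α.length = c}

/-- the set `{G(T) : T ∈ A_ψ(n)}` -/
def GSet (ψ : PBCM) (A : Set (Table 2)) (n : ℕ) : Set ℕ :=
  {c | ∃ T ∈ A, mpsi ψ T ≤ n ∧ Gt T = c}

/-- `G_{ψ,A}(n)` -/
def Gfun (ψ : PBCM) (A : Set (Table 2)) (n : ℕ) : ℕ := sSup (GSet ψ A n)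

/-! ### The tables `T_k` and `T_k^*` built from the triangle-shaped graph `G_k` -/

/-- `m(k) = k(k+1)/2` : number of nodes of `G_k` -/
def mnum (k : ℕ) : ℕ := k * (k + 1) / 2

/-- the layer of node `i` of `G_k` : the unique `L` with `m(L-1) < i ≤ m(L)` -/
def layer (i : ℕ) : ℕ := sInf {L | i ≤ mnum L}

/-- left child `l(i) = i + layer i`; right child `p(i) = i + layer i + 1` -/
def lchild (i : ℕ) : ℕ := i + layer i

def rchild (i : ℕ) : ℕ := i + layer i + 1

/-- the map `ν_k : E_2^{m(k)} → P(ω)` -/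
def nuk (k : ℕ) (δ : ℕ → ℕ) : Finset ℕ :=
  (Finset.range (mnum k + 1)).filter fun i =>
    if i = 0 then δ 1 = 0
    else if layer i = k then δ i = 1
    else δ i = 1 ∧ δ (lchild i) = 0 ∧ δ (rchild i) = 0

/-- all tuples over `E_k` supported on the attribute set `s` -/
def allRows (k : ℕ) (s : Finset ℕ) : Finset (ℕ → ℕ) :=
  (s.pi fun _ => Finset.range k).image fun f i => if h : i ∈ s then f i h else 0

/-- the table with attribute set `s`, all possible rows, and decision labeling `d` -/
def fullTable (k : ℕ) (s : Finset ℕ) (d : (ℕ → ℕ) → Finset ℕ) : Table k where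
  attrs := s
  rows := allRows k s
  dec := fun r => if (d r).Nonempty then d r else {0}
  rows_mem := by
    intro r hr
    simp only [allRows, Finset.mem_image] at hr
    obtain ⟨f, hf, rfl⟩ := hr
    refine ⟨fun i hi => ?_, fun i hi => ?_⟩
    · have h := (Finset.mem_pi.mp hf) i hi
      simp only [Finset.mem_range] at h
      simpa [hi] using h
    · simp [hi]
  dec_nonempty := by
    intro r _
    by_cases h : (d r).Nonempty
    · simp [h]
    · simp [h]

/-- the complete table `T_k` with `m(k)` columns `f_1, …, f_{m(k)}` and `2^{m(k)}` rows,
each row `δ̄` labeled with `ν_k(δ̄)` (which is always nonempty) -/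
def Tk (k : ℕ) : Table 2 := fullTable 2 (Finset.Icc 1 (mnum k)) (nuk k)

/-- the `j`-th node of the complete path of `G_k` determined by the choices `c` -/
def pathNode (c : ℕ → Bool) : ℕ → ℕ
  | 0 => 1
  | j + 1 => if c j then lchild (pathNode c j) else rchild (pathNode c j)

/-- `T_k^*` : the subtable of `T_k` whose rows are exactly the characteristic tuples
of complete paths of `G_k` -/
def Tstar (k : ℕ) : Table 2 where
  attrs := (Tk k).attrs
  rows := (Tk k).rows.filter fun r =>
    ∃ c : ℕ → Bool, ∀ i ∈ Finset.Icc 1 (mnum k), (r i = 1 ↔ ∃ j < k, pathNode c j = i)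
  dec := (Tk k).dec
  rows_mem := fun r hr => (Tk k).rows_mem r (Finset.mem_filter.mp hr).1
  dec_nonempty := fun r hr => (Tk k).dec_nonempty r (Finset.mem_filter.mp hr).1

/-- `r(T)` for a subtable `T` of `T_k^*` : the number of distinct decision sets
`ν_k(δ̄)` among the rows `δ̄` of `T` -/
def rnum (k : ℕ) (T : Table 2) : ℕ := (T.rows.image (nuk k)).card

end

/-! Let `α` be an irreducible annihilating word of maximal length `m = G(T)`. Keep only the
columns of `α` and label each row by the set of attributes at which it violates `α`; the result
`T*` lies in `[T]`. Every row violates some letter `(a, δ)`, so the nondeterministic tree with one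
branch per letter, asking `f_a` and answering `a` on the edge `1 - δ`, solves `T*` with
complexity at most `m_ψ(T) ≤ n`. By irreducibility, for each attribute `a` of `α` some row
violates `α` exactly at `a`; these `m` rows have the single decision `a` and differ pairwise only
at their own attributes, so some path of any deterministic tree for `T*` asks for all but one of
them, and `ψ^d(T*) ≥ m - 1` because `ψ` bounds the length. -/

namespace Table

variable {k : ℕ}

@[simp]
lemma mem_applyWord_rows {T : Table k} {α : List (ℕ × ℕ)} {r : ℕ → ℕ} :
    r ∈ (T.applyWord α).rows ↔ r ∈ T.rows ∧ rowSat r α :=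
  Finset.mem_filter

lemma rowSat_cons {r : ℕ → ℕ} {q : ℕ × ℕ} {α : List (ℕ × ℕ)} :
    rowSat r (q :: α) ↔ r q.1 = q.2 ∧ rowSat r α :=
  List.forall_mem_cons

lemma eq_of_eqOn_attrs {T : Table k} {r r' : ℕ → ℕ} (hr : r ∈ T.rows) (hr' : r' ∈ T.rows)
    (h : ∀ i ∈ T.attrs, r i = r' i) : r = r' := by
  funext i
  by_cases hi : i ∈ T.attrs
  · exact h i hi
  · rw [(T.rows_mem r hr).2 i hi, (T.rows_mem r' hr').2 i hi]

lemma hasCommon_of_subsingleton {T : Table k} (h : ∀ r ∈ T.rows, ∀ r' ∈ T.rows, r = r') :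
    T.hasCommon := by
  rcases T.rows.eq_empty_or_nonempty with hT | ⟨r, hr⟩
  · exact ⟨0, by simp [hT]⟩
  · obtain ⟨d, hd⟩ := T.dec_nonempty r hr
    exact ⟨d, fun r' hr' => h r hr r' hr' ▸ hd⟩

/-- The row `r` after the columns in `D` have been removed, i.e. the row of `I(D, T)`. -/
def projRow (T : Table k) (D : Finset ℕ) (r : ℕ → ℕ) : ℕ → ℕ :=
  fun i => if i ∈ T.attrs \ D then r i else 0

/-- The table `J(ν, I(D, T))`, with `ν` given by `d`. -/
noncomputable def project (T : Table k) (D : Finset ℕ) (d : (ℕ → ℕ) → Finset ℕ)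
    (hd : ∀ r ∈ T.rows, (d (T.projRow D r)).Nonempty) : Table k where
  attrs := T.attrs \ D
  rows := T.rows.image (T.projRow D)
  dec := d
  rows_mem := by
    simp only [Finset.mem_image]
    rintro _ ⟨r, hr, rfl⟩
    refine ⟨fun i hi => ?_, fun i hi => if_neg hi⟩
    simpa [projRow, hi] using (T.rows_mem r hr).1 i (Finset.mem_sdiff.mp hi).1
  dec_nonempty := by
    simp only [Finset.mem_image]
    rintro _ ⟨r, hr, rfl⟩
    exact hd r hr

lemma project_mem_closureT {T : Table k} {D : Finset ℕ} {d : (ℕ → ℕ) → Finset ℕ}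
    {hd : ∀ r ∈ T.rows, (d (T.projRow D r)).Nonempty} (hD : D ⊆ T.attrs) :
    T.project D d hd ∈ T.closureT :=
  ⟨D, hD, rfl, rfl⟩

end Table

namespace DTree

variable {k : ℕ}

lemma mem_paths_node {a n : ℕ} {lab : Fin (n + 1) → ℕ} {ch : Fin (n + 1) → DTree k}
    {p : List (ℕ × ℕ) × ℕ} :
    p ∈ (node a n lab ch).paths ↔ ∃ i, ∃ x ∈ (ch i).paths, ((a, lab i) :: x.1, x.2) = p := by
  simp [paths]

lemma paths_nonempty (t : DTree k) : t.paths.Nonempty := by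
  induction t with
  | leaf d => exact ⟨([], d), rfl⟩
  | node a n lab ch ih =>
    obtain ⟨x, hx⟩ := ih 0
    exact ⟨_, mem_paths_node.mpr ⟨0, x, hx, rfl⟩⟩

lemma paths_finite (t : DTree k) : t.paths.Finite := by
  induction t with
  | leaf d => exact Set.finite_singleton _
  | node a n lab ch ih => exact Set.finite_iUnion fun i => (ih i).image _

def query (a v d : ℕ) : DTree k := node a 0 (fun _ => v) (fun _ => leaf d)

lemma paths_query {a v d : ℕ} : (query a v d : DTree k).paths = {([(a, v)], d)} := by
  ext p
  simp [query, paths]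

lemma attrs_query {a v d : ℕ} : (query a v d : DTree k).attrs = {a} := by
  simp [query, attrs]

lemma wf_query {a v d : ℕ} (hv : v < k) : (query a v d : DTree k).wf :=
  ⟨fun _ => hv, fun _ => trivial⟩

def full (k : ℕ) (g : List (ℕ × ℕ) → ℕ) : List ℕ → DTree k
  | [] => leaf (g [])
  | a :: l => node a (k - 1) (fun i => i) (fun i => full k (fun w => g ((a, i) :: w)) l)

lemma wf_full (hk : 0 < k) (g : List (ℕ × ℕ) → ℕ) (l : List ℕ) : (full k g l).wf := by
  induction l generalizing g with
  | nil => trivial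
  | cons a l ih => exact ⟨fun i => show (i : ℕ) < k by have := i.isLt; omega, fun _ => ih _⟩

lemma det_full (g : List (ℕ × ℕ) → ℕ) (l : List ℕ) : (full k g l).det := by
  induction l generalizing g with
  | nil => trivial
  | cons a l ih => exact ⟨fun _ _ h => Fin.val_injective h, fun _ => ih _⟩

lemma attrs_full_subset (g : List (ℕ × ℕ) → ℕ) (l : List ℕ) :
    (full k g l).attrs ⊆ l.toFinset := by
  induction l generalizing g with
  | nil => simp [full, attrs]
  | cons a l ih =>
    simp only [full, attrs, List.toFinset_cons]
    exact Finset.insert_subset_insert a (Finset.biUnion_subset.mpr fun _ _ => ih _)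

lemma exists_of_mem_paths_full {g : List (ℕ × ℕ) → ℕ} {l : List ℕ} {p : List (ℕ × ℕ) × ℕ}
    (hp : p ∈ (full k g l).paths) : ∃ u : List (ℕ × ℕ), u.map Prod.fst = l ∧ p = (u, g u) := by
  induction l generalizing g p with
  | nil => exact ⟨[], rfl, hp⟩
  | cons a l ih =>
    obtain ⟨i, x, hx, rfl⟩ := mem_paths_node.mp hp
    obtain ⟨u, rfl, rfl⟩ := ih hx
    exact ⟨(a, i) :: u, rfl, rfl⟩

lemma mem_paths_full {g : List (ℕ × ℕ) → ℕ} {u : List (ℕ × ℕ)} (hu : ∀ q ∈ u, q.2 < k) :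
    (u, g u) ∈ (full k g (u.map Prod.fst)).paths := by
  induction u generalizing g with
  | nil => rfl
  | cons q u ih =>
    rw [List.forall_mem_cons] at hu
    exact mem_paths_node.mpr
      ⟨⟨q.2, by omega⟩, _, ih (g := fun w => g ((q.1, q.2) :: w)) hu.2, rfl⟩

end DTree

namespace KTree

variable {k : ℕ}

lemma mem_paths {Γ : KTree k} {p : List (ℕ × ℕ) × ℕ} :
    p ∈ Γ.paths ↔ ∃ i, p ∈ (Γ.sub i).paths :=
  Set.mem_iUnion

lemma paths_nonempty (Γ : KTree k) : Γ.paths.Nonempty :=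
  let ⟨p, hp⟩ := (Γ.sub 0).paths_nonempty
  ⟨p, mem_paths.mpr ⟨0, hp⟩⟩

lemma paths_finite (Γ : KTree k) : Γ.paths.Finite :=
  Set.finite_iUnion fun i => (Γ.sub i).paths_finite

def ofList (ts : List (DTree k)) (hts : ts ≠ []) : KTree k where
  n := ts.length - 1
  sub j := ts[j.val]'(by have := j.isLt; have := List.length_pos_iff.mpr hts; omega)

lemma exists_sub_ofList_iff {ts : List (DTree k)} {hts : ts ≠ []} {P : DTree k → Prop} :
    (∃ j, P ((ofList ts hts).sub j)) ↔ ∃ t ∈ ts, P t := by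
  constructor
  · rintro ⟨j, hj⟩
    exact ⟨_, List.getElem_mem _, hj⟩
  · rintro ⟨t, ht, hPt⟩
    obtain ⟨j, hj, rfl⟩ := List.mem_iff_getElem.mp ht
    exact ⟨⟨j, show j < ts.length - 1 + 1 by omega⟩, hPt⟩

lemma mem_paths_ofList {ts : List (DTree k)} {hts : ts ≠ []} {p : List (ℕ × ℕ) × ℕ} :
    p ∈ (ofList ts hts).paths ↔ ∃ t ∈ ts, p ∈ t.paths :=
  mem_paths.trans (exists_sub_ofList_iff (P := fun t => p ∈ t.paths))

lemma mem_attrs_ofList {ts : List (DTree k)} {hts : ts ≠ []} {a : ℕ} :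
    a ∈ (ofList ts hts).attrs ↔ ∃ t ∈ ts, a ∈ t.attrs := by
  simp only [attrs, Finset.mem_biUnion, Finset.mem_univ, true_and]
  exact exists_sub_ofList_iff (P := fun t => a ∈ t.attrs)

lemma wf_ofList {ts : List (DTree k)} {hts : ts ≠ []} (h : ∀ t ∈ ts, t.wf) :
    (ofList ts hts).wf :=
  fun _ => h _ (List.getElem_mem _)

end KTree

section Complexity

variable {k : ℕ} (ψ : PBCM)

lemma le_treeComp {Γ : KTree k} {p : List (ℕ × ℕ) × ℕ} (hp : p ∈ Γ.paths) :
    ψ.onWord p.1 ≤ treeComp ψ Γ := by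
  refine le_csSup ?_ ⟨p, hp, rfl⟩
  obtain ⟨b, hb⟩ := (Γ.paths_finite.image fun p => ψ.onWord p.1).bddAbove
  exact ⟨b, by rintro _ ⟨q, hq, rfl⟩; exact hb ⟨q, hq, rfl⟩⟩

lemma treeComp_le {Γ : KTree k} {n : ℕ} (h : ∀ p ∈ Γ.paths, ψ.onWord p.1 ≤ n) :
    treeComp ψ Γ ≤ n := by
  obtain ⟨p, hp⟩ := Γ.paths_nonempty
  exact csSup_le ⟨_, p, hp, rfl⟩ (by rintro _ ⟨q, hq, rfl⟩; exact h q hq)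

lemma psiA_le_treeComp {T : Table k} {Γ : KTree k} (hΓ : isNDT T Γ) :
    psiA ψ T ≤ treeComp ψ Γ :=
  Nat.sInf_le ⟨Γ, hΓ, rfl⟩

end Complexity

section Deterministic

variable {k : ℕ}

noncomputable def Table.commonDec (T : Table k) (w : List (ℕ × ℕ)) : ℕ :=
  if h : (T.applyWord w).hasCommon then h.choose else 0

lemma Table.commonDec_mem {T : Table k} {w : List (ℕ × ℕ)} (h : (T.applyWord w).hasCommon)
    {r : ℕ → ℕ} (hr : r ∈ (T.applyWord w).rows) : T.commonDec w ∈ T.dec r := by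
  rw [Table.commonDec, dif_pos h]
  exact h.choose_spec r hr

/-- Asking for every attribute of `T` isolates a single row, so it solves `T`. -/
lemma exists_isDDT (T : Table k) (hk : 0 < k) (hT : T.rows.Nonempty) : ∃ Γ, isDDT T Γ := by
  set l := T.attrs.sort (· ≤ ·)
  refine ⟨⟨0, fun _ => DTree.full k T.commonDec l⟩, ⟨hT, fun _ => DTree.wf_full hk _ _, ?_, ?_, ?_⟩,
    rfl, fun _ => DTree.det_full _ _⟩
  · intro a ha
    simp only [KTree.attrs, Finset.mem_biUnion] at ha
    obtain ⟨_, -, ha⟩ := ha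
    simpa [l] using DTree.attrs_full_subset _ _ ha
  · intro r hr
    set u := l.map fun a => (a, r a)
    have hu : (u, T.commonDec u) ∈ (DTree.full k T.commonDec l).paths := by
      have := DTree.mem_paths_full (k := k) (g := T.commonDec) (u := u)
        (by simpa [u, l] using fun a ha => (T.rows_mem r hr).1 a ha)
      simpa [u, Function.comp_def] using this
    refine ⟨_, KTree.mem_paths.mpr ⟨0, hu⟩, fun q hq => ?_⟩
    obtain ⟨a, -, rfl⟩ := List.mem_map.mp hq
    rfl
  · intro p hp
    obtain ⟨_, hp⟩ := KTree.mem_paths.mp hp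
    obtain ⟨u, hu, rfl⟩ := DTree.exists_of_mem_paths_full hp
    refine Or.inr fun r hr => Table.commonDec_mem (Table.hasCommon_of_subsingleton ?_) hr
    simp only [Table.mem_applyWord_rows]
    rintro r ⟨hr, hru⟩ r' ⟨hr', hru'⟩
    refine Table.eq_of_eqOn_attrs hr hr' fun i hi => ?_
    have : i ∈ u.map Prod.fst := by simpa [hu, l] using hi
    obtain ⟨q, hq, rfl⟩ := List.mem_map.mp this
    rw [hru q hq, hru' q hq]

lemma DTree.exists_child_forall_rowSat {c n : ℕ} {lab : Fin (n + 1) → ℕ}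
    {ch : Fin (n + 1) → DTree k} (ht : (node c n lab ch).det) {ρ : ℕ → ℕ → ℕ} {s : Finset ℕ}
    {v : ℕ} (hs : s.Nonempty) (hv : ∀ b ∈ s, ρ b c = v)
    (hcover : ∀ b ∈ s, ∃ p ∈ (node c n lab ch).paths, Table.rowSat (ρ b) p.1) :
    ∃ i, lab i = v ∧ ∀ b ∈ s, ∃ x ∈ (ch i).paths, Table.rowSat (ρ b) x.1 := by
  have hchild : ∀ b ∈ s, ∃ i, lab i = v ∧ ∃ x ∈ (ch i).paths, Table.rowSat (ρ b) x.1 := by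
    intro b hb
    obtain ⟨p, hp, hsat⟩ := hcover b hb
    obtain ⟨i, x, hx, rfl⟩ := DTree.mem_paths_node.mp hp
    obtain ⟨hbi, hsat⟩ := Table.rowSat_cons.mp hsat
    exact ⟨i, hbi.symm.trans (hv b hb), x, hx, hsat⟩
  obtain ⟨b₀, hb₀⟩ := hs
  obtain ⟨i, hi, -⟩ := hchild b₀ hb₀
  refine ⟨i, hi, fun b hb => ?_⟩
  obtain ⟨j, hj, hx⟩ := hchild b hb
  rwa [← ht.1 (hj.trans hi.symm)]

/-- Follow the child into which all rows whose index has not been asked for yet descend: they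
agree at every other attribute. -/
theorem DTree.exists_path_separating (ρ : ℕ → ℕ → ℕ) (t : DTree k) (ht : t.det) (s : Finset ℕ)
    (hagree : ∀ a ∈ s, ∀ b ∈ s, ∀ c, c ≠ a → c ≠ b → ρ a c = ρ b c)
    (hcover : ∀ a ∈ s, ∃ p ∈ t.paths, Table.rowSat (ρ a) p.1)
    (hsound : ∀ p ∈ t.paths, ∀ a ∈ s, Table.rowSat (ρ a) p.1 → p.2 = a) :
    ∃ p ∈ t.paths, ∀ a ∈ s, a ≠ p.2 → a ∈ p.1.map Prod.fst := by
  induction t generalizing s with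
  | leaf d =>
    refine ⟨([], d), rfl, fun a ha had => absurd ?_ had⟩
    exact (hsound _ rfl a ha fun _ h => absurd h List.not_mem_nil).symm
  | node c n lab ch ih =>
    rcases (s.erase c).eq_empty_or_nonempty with hs | ⟨b₀, hb₀⟩
    · obtain ⟨p, hp⟩ := (node c n lab ch).paths_nonempty
      obtain ⟨i, x, -, rfl⟩ := DTree.mem_paths_node.mp hp
      refine ⟨_, hp, fun a ha _ => ?_⟩
      have : a = c := by by_contra h; simpa [hs] using Finset.mem_erase.mpr ⟨h, ha⟩
      simp [this]
    · have hρc : ∀ b ∈ s.erase c, ρ b c = ρ b₀ c := fun b hb =>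
        hagree b (Finset.mem_of_mem_erase hb) b₀ (Finset.mem_of_mem_erase hb₀) c
          (Finset.ne_of_mem_erase hb).symm (Finset.ne_of_mem_erase hb₀).symm
      obtain ⟨i, hi, hcover'⟩ := DTree.exists_child_forall_rowSat ht ⟨b₀, hb₀⟩ hρc
        fun b hb => hcover b (Finset.mem_of_mem_erase hb)
      obtain ⟨x, hx, hxs⟩ := ih i (ht.2 i) (s.erase c)
        (fun a ha b hb => hagree a (Finset.mem_of_mem_erase ha) b (Finset.mem_of_mem_erase hb))
        hcover'
        (fun x hx b hb hsat => hsound _ (DTree.mem_paths_node.mpr ⟨i, x, hx, rfl⟩) b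
          (Finset.mem_of_mem_erase hb) (Table.rowSat_cons.mpr ⟨(hρc b hb).trans hi.symm, hsat⟩))
      refine ⟨_, DTree.mem_paths_node.mpr ⟨i, x, hx, rfl⟩, fun a ha hax => ?_⟩
      by_cases hac : a = c
      · simp [hac]
      · exact List.mem_cons_of_mem _ (hxs a (Finset.mem_erase.mpr ⟨hac, ha⟩) hax)

lemma card_sub_one_le_psiD (ψ : BCM) (T : Table k) (hk : 0 < k) (s : Finset ℕ)
    (ρ : ℕ → ℕ → ℕ) (hρ : ∀ a ∈ s, ρ a ∈ T.rows) (hdec : ∀ a ∈ s, T.dec (ρ a) ⊆ {a})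
    (hagree : ∀ a ∈ s, ∀ b ∈ s, ∀ c, c ≠ a → c ≠ b → ρ a c = ρ b c) :
    s.card - 1 ≤ psiD ψ.toPBCM T := by
  rcases s.eq_empty_or_nonempty with rfl | ⟨a₀, ha₀⟩
  · simp
  obtain ⟨Γ₀, hΓ₀⟩ := exists_isDDT T hk ⟨_, hρ a₀ ha₀⟩
  refine le_csInf ⟨_, Γ₀, hΓ₀, rfl⟩ ?_
  rintro _ ⟨⟨n, sub⟩, ⟨⟨-, -, -, hcover, hsound⟩, rfl : n = 0, hdet⟩, rfl⟩
  have hpaths : ∀ {p}, p ∈ (⟨0, sub⟩ : KTree k).paths ↔ p ∈ (sub 0).paths := by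
    simp [KTree.mem_paths, Fin.exists_fin_one]
  obtain ⟨p, hp, hps⟩ := (sub 0).exists_path_separating ρ (hdet 0) s hagree
    (fun a ha => by simpa only [hpaths] using hcover _ (hρ a ha))
    (fun p hp a ha hsat => by
      rcases hsound p (hpaths.mpr hp) with h | h
      · simpa [h] using Table.mem_applyWord_rows.mpr ⟨hρ a ha, hsat⟩
      · simpa using hdec a ha (h _ (Table.mem_applyWord_rows.mpr ⟨hρ a ha, hsat⟩)))
  calc s.card - 1 ≤ (s.erase p.2).card := Finset.pred_card_le_card_erase
    _ ≤ (p.1.map Prod.fst).toFinset.card := Finset.card_le_card fun a ha => by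
        simpa using hps a (Finset.mem_of_mem_erase ha) (Finset.ne_of_mem_erase ha)
    _ ≤ (p.1.map Prod.fst).length := List.toFinset_card_le _
    _ ≤ ψ.toPBCM.onWord p.1 := ψ.bdd _
    _ ≤ treeComp ψ.toPBCM _ := le_treeComp _ (hpaths.mpr hp)

end Deterministic

section Annihilating

variable {T : Table 2} {α β : List (ℕ × ℕ)}

lemma isAnnih.not_rowSat (h : isAnnih T α) {r : ℕ → ℕ} (hr : r ∈ T.rows) :
    ¬ Table.rowSat r α := fun hsat =>
  Finset.notMem_empty r (h.2.2 ▸ Table.mem_applyWord_rows.mpr ⟨hr, hsat⟩)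

lemma isAnnih.isAnnih_iff_of_subset (h : isAnnih T α) (hβ : β ⊆ α) :
    isAnnih T β ↔ ∀ r ∈ T.rows, ¬ Table.rowSat r β := by
  refine ⟨fun hb r hr => hb.not_rowSat hr, fun hb => ⟨fun q hq => h.1 q (hβ hq),
    fun p hp q hq => h.2.1 p (hβ hp) q (hβ hq), ?_⟩⟩
  exact Finset.eq_empty_of_forall_notMem fun r hr =>
    hb r (Table.mem_applyWord_rows.mp hr).1 (Table.mem_applyWord_rows.mp hr).2

lemma isIrredAnnih.nodup (h : isIrredAnnih T α) : α.Nodup := by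
  by_contra hnd
  refine h.2 α.dedup (List.dedup_sublist α) (mt List.dedup_eq_self.mp hnd) ?_
  rw [h.1.isAnnih_iff_of_subset (List.dedup_sublist α).subset]
  exact fun r hr hsat => h.1.not_rowSat hr fun q hq => hsat q (List.mem_dedup.mpr hq)

lemma isIrredAnnih.nodup_map_fst (h : isIrredAnnih T α) : (α.map Prod.fst).Nodup :=
  h.nodup.map_on fun p hp q hq hpq => Prod.ext hpq (h.1.2.1 p hp q hq hpq)

/-- Deleting the letter at attribute `a` from `α` leaves a word satisfied by some row. -/
lemma isIrredAnnih.exists_row (h : isIrredAnnih T α) {a : ℕ} (ha : a ∈ α.map Prod.fst) :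
    ∃ r ∈ T.rows, ∀ q ∈ α, r q.1 = q.2 ↔ q.1 ≠ a := by
  obtain ⟨q₀, hq₀, rfl⟩ := List.mem_map.mp ha
  have hne : α.erase q₀ ≠ α := fun he => by
    have := congrArg List.length he
    rw [List.length_erase_of_mem hq₀] at this
    have := List.length_pos_of_mem hq₀
    omega
  have hnot := h.2 _ (List.erase_sublist) hne
  rw [h.1.isAnnih_iff_of_subset (List.erase_sublist).subset] at hnot
  push Not at hnot
  obtain ⟨r, hr, hsat⟩ := hnot
  have hmem : ∀ q ∈ α, q.1 ≠ q₀.1 → q ∈ α.erase q₀ := fun q hq hq₀ =>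
    (h.nodup.mem_erase_iff).mpr ⟨fun he => hq₀ (he ▸ rfl), hq⟩
  refine ⟨r, hr, fun q hq => ⟨fun hrq hq₀ => ?_, fun hq₀ => hsat q (hmem q hq hq₀)⟩⟩
  refine h.1.not_rowSat hr fun q' hq' => ?_
  by_cases hq'₀ : q'.1 = q₀.1
  · rw [hq'₀, ← hq₀, hrq, h.1.2.1 q hq q' hq' (hq₀.trans hq'₀.symm)]
  · exact hsat q' (hmem q' hq' hq'₀)

lemma isIrredAnnih.rows_nonempty (h : isIrredAnnih T α) (hα : α ≠ []) : T.rows.Nonempty := by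
  obtain ⟨q, hq⟩ := List.exists_mem_of_ne_nil α hα
  obtain ⟨r, hr, -⟩ := h.exists_row (List.mem_map_of_mem hq)
  exact ⟨r, hr⟩

lemma isIrredAnnih.length_le_card (h : isIrredAnnih T α) : α.length ≤ T.attrs.card := by
  rw [← List.length_map (f := Prod.fst), ← List.toFinset_card_of_nodup h.nodup_map_fst]
  refine Finset.card_le_card fun a ha => ?_
  obtain ⟨q, hq, rfl⟩ := List.mem_map.mp (List.mem_toFinset.mp ha)
  exact (h.1.1 q hq).1

lemma exists_isIrredAnnih_length_eq_Gt (hG : 0 < Gt T) :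
    ∃ α, isIrredAnnih T α ∧ α.length = Gt T := by
  have hne : {c | ∃ α, isIrredAnnih T α ∧ α.length = c}.Nonempty := by
    by_contra hne
    rw [Set.not_nonempty_iff_eq_empty] at hne
    simp [Gt, hne] at hG
  exact Nat.sSup_mem hne ⟨T.attrs.card, by rintro _ ⟨α, hα, rfl⟩; exact hα.length_le_card⟩

end Annihilating

section ViolationTable

variable {T : Table 2} {α : List (ℕ × ℕ)}

def violated (α : List (ℕ × ℕ)) (r : ℕ → ℕ) : Finset ℕ :=
  ((α.filter fun q => r q.1 ≠ q.2).map Prod.fst).toFinset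

lemma mem_violated {r : ℕ → ℕ} {a : ℕ} :
    a ∈ violated α r ↔ ∃ q ∈ α, r q.1 ≠ q.2 ∧ q.1 = a := by
  simp [violated, and_assoc]

lemma isAnnih.attrs_subset (h : isAnnih T α) : (α.map Prod.fst).toFinset ⊆ T.attrs := by
  intro a ha
  obtain ⟨q, hq, rfl⟩ := List.mem_map.mp (List.mem_toFinset.mp ha)
  exact (h.1 q hq).1

lemma isAnnih.projRow_apply (h : isAnnih T α) (r : ℕ → ℕ) (i : ℕ) :
    T.projRow (T.attrs \ (α.map Prod.fst).toFinset) r i =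
      if i ∈ α.map Prod.fst then r i else 0 := by
  simp only [Table.projRow, Finset.sdiff_sdiff_eq_self h.attrs_subset, List.mem_toFinset]

lemma isAnnih.projRow_apply_fst (h : isAnnih T α) (r : ℕ → ℕ) {q : ℕ × ℕ} (hq : q ∈ α) :
    T.projRow (T.attrs \ (α.map Prod.fst).toFinset) r q.1 = r q.1 := by
  rw [h.projRow_apply, if_pos (List.mem_map_of_mem hq)]

/-- The table `T*`: only the columns of `α` are kept and each row is labeled with the
attributes at which it violates `α`, a nonempty set because `α` annihilates `T`. -/
noncomputable def isAnnih.violationTable (h : isAnnih T α) : Table 2 :=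
  T.project (T.attrs \ (α.map Prod.fst).toFinset) (violated α) fun r hr => by
    have := h.not_rowSat hr
    simp only [Table.rowSat, not_forall] at this
    obtain ⟨q, hq, hrq⟩ := this
    exact ⟨q.1, mem_violated.mpr ⟨q, hq, by rwa [h.projRow_apply_fst r hq], rfl⟩⟩

lemma isAnnih.violationTable_attrs (h : isAnnih T α) :
    h.violationTable.attrs = (α.map Prod.fst).toFinset :=
  Finset.sdiff_sdiff_eq_self h.attrs_subset

lemma isAnnih.violationTable_mem_closureT (h : isAnnih T α) : h.violationTable ∈ T.closureT :=
  Table.project_mem_closureT Finset.sdiff_subset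

lemma isAnnih.ne_nil (h : isAnnih T α) (hT : T.rows.Nonempty) : α ≠ [] := by
  rintro rfl
  obtain ⟨r, hr⟩ := hT
  exact h.not_rowSat hr fun _ h => absurd h List.not_mem_nil

def violationTree (α : List (ℕ × ℕ)) (hα : α ≠ []) : KTree 2 :=
  KTree.ofList (α.map fun q => DTree.query q.1 (1 - q.2) q.1) (by simpa using hα)

lemma mem_paths_violationTree {hα : α ≠ []} {p : List (ℕ × ℕ) × ℕ} :
    p ∈ (violationTree α hα).paths ↔ ∃ q ∈ α, p = ([(q.1, 1 - q.2)], q.1) := by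
  simp [violationTree, KTree.mem_paths_ofList, DTree.paths_query, eq_comm]

/-- Every row violates some letter `(a, v)` of `α`, i.e. has value `1 - v` at `a`, and then `a`
is one of its decisions. -/
lemma isAnnih.isNDT_violationTree (h : isAnnih T α) (hT : T.rows.Nonempty) :
    isNDT h.violationTable (violationTree α (h.ne_nil hT)) := by
  have hq2 : ∀ q ∈ α, q.2 < 2 := fun q hq => (h.1 q hq).2
  refine ⟨hT.image _, KTree.wf_ofList ?_, ?_, ?_, ?_⟩
  · simp only [List.mem_map]
    rintro _ ⟨q, hq, rfl⟩
    exact DTree.wf_query (by have := hq2 q hq; omega)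
  · intro a ha
    simp only [violationTree, KTree.mem_attrs_ofList, List.mem_map] at ha
    obtain ⟨_, ⟨q, hq, rfl⟩, ha⟩ := ha
    rw [DTree.attrs_query] at ha
    rw [Finset.mem_singleton.mp ha, h.violationTable_attrs]
    exact List.mem_toFinset.mpr (List.mem_map_of_mem hq)
  · simp only [isAnnih.violationTable, Table.project, Finset.mem_image]
    rintro _ ⟨r, hr, rfl⟩
    have := h.not_rowSat hr
    simp only [Table.rowSat, not_forall] at this
    obtain ⟨q, hq, hrq⟩ := this
    have hr2 := (T.rows_mem r hr).1 q.1 (h.1 q hq).1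
    refine ⟨_, mem_paths_violationTree.mpr ⟨q, hq, rfl⟩, fun q' hq' => ?_⟩
    rw [List.mem_singleton.mp hq', h.projRow_apply_fst r hq]
    have := hq2 q hq
    omega
  · intro p hp
    obtain ⟨q, hq, rfl⟩ := mem_paths_violationTree.mp hp
    refine Or.inr fun r hr => mem_violated.mpr ⟨q, hq, ?_, rfl⟩
    have hrq := (Table.rowSat_cons.mp (Table.mem_applyWord_rows.mp hr).2).1
    have := hq2 q hq
    simp only at hrq
    omega

lemma isAnnih.psiA_violationTable_le (h : isAnnih T α) (hT : T.rows.Nonempty) (ψ : PBCM) :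
    psiA ψ h.violationTable ≤ mpsi ψ T := by
  refine (psiA_le_treeComp ψ (h.isNDT_violationTree hT)).trans (treeComp_le ψ fun p hp => ?_)
  obtain ⟨q, hq, rfl⟩ := mem_paths_violationTree.mp hp
  rw [mpsi, if_neg hT.ne_empty]
  exact Finset.le_sup (f := fun i => ψ.toFun [i]) (h.1 q hq).1

/-- For each attribute `a` of `α` some row violates `α` exactly at `a`, and these rows must all
be told apart. -/
lemma isIrredAnnih.length_sub_one_le_psiD_violationTable (h : isIrredAnnih T α) (ψ : BCM) :
    α.length - 1 ≤ psiD ψ.toPBCM h.1.violationTable := by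
  choose! r hr hrα using fun a (ha : a ∈ α.map Prod.fst) => h.exists_row ha
  set ρ := fun a => T.projRow (T.attrs \ (α.map Prod.fst).toFinset) (r a)
  have hρ : ∀ a ∈ α.map Prod.fst, ∀ q ∈ α, ρ a q.1 = q.2 ↔ q.1 ≠ a := fun a ha q hq => by
    rw [show ρ a q.1 = r a q.1 from h.1.projRow_apply_fst _ hq]
    exact hrα a ha q hq
  have := card_sub_one_le_psiD ψ h.1.violationTable two_pos (α.map Prod.fst).toFinset ρ
    (fun a ha => Finset.mem_image_of_mem _ (hr a (List.mem_toFinset.mp ha)))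
    (fun a ha b hb => by
      obtain ⟨q, hq, hρq, rfl⟩ := mem_violated.mp hb
      by_contra hne
      exact hρq ((hρ a (List.mem_toFinset.mp ha) q hq).mpr (by simpa using hne)))
    (fun a ha b hb c hca hcb => by
      simp only [List.mem_toFinset] at ha hb
      by_cases hc : c ∈ α.map Prod.fst
      · obtain ⟨q, hq, rfl⟩ := List.mem_map.mp hc
        rw [(hρ a ha q hq).mpr hca, (hρ b hb q hq).mpr hcb]
      · simp only [ρ, h.1.projRow_apply, if_neg hc])
  rwa [List.toFinset_card_of_nodup h.nodup_map_fst, List.length_map] at this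

end ViolationTable

theorem stmt16_general (ψ : BCM) (n : ℕ)
    (T : Table 2) (hm : mpsi ψ.toPBCM T ≤ n) (hG : 0 < Gt T) :
    ∃ T' ∈ Table.closureT T, psiA ψ.toPBCM T' ≤ n ∧ Gt T - 1 ≤ psiD ψ.toPBCM T' := by
  obtain ⟨α, hα, hlen⟩ := exists_isIrredAnnih_length_eq_Gt hG
  have hT : T.rows.Nonempty := hα.rows_nonempty (List.ne_nil_of_length_pos (hlen ▸ hG))
  refine ⟨hα.1.violationTable, hα.1.violationTable_mem_closureT,
    (hα.1.psiA_violationTable_le hT _).trans hm, ?_⟩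
  rw [← hlen]
  exact hα.length_sub_one_le_psiD_violationTable ψ

/-- **Lemma (7M10).** If `T ∈ A_ψ(n)` and `G(T) > 0`, then there exists `T* ∈ [T]` with
`ψ^a(T*) ≤ n` and `ψ^d(T*) ≥ G(T) − 1`. -/
theorem stmt16 (A : Set (Table 2)) (hclosed : IsClosedClass A)
    (hnontriv : NontrivialClass A) (ψ : BCM) (n : ℕ)
    (T : Table 2) (hT : T ∈ A) (hm : mpsi ψ.toPBCM T ≤ n) (hG : 0 < Gt T) :
    ∃ T' ∈ Table.closureT T, psiA ψ.toPBCM T' ≤ n ∧ Gt T - 1 ≤ psiD ψ.toPBCM T' :=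
  stmt16_general ψ n T hm hG
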